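/- Let u₁, u₂ ∈ ℝ² be linearly independent vectors, let L := (ℝ·u₁) ∪ (ℝ·u₂) be the union of the two corresponding lines through the origin, and let f : ℝ² → ℝ be continuous such that for every connected component C of ℝ² \ L there is a linear function g_C : ℝ² → ℝ with f = g_C on C. Then there exist functions f₁, f₂ : ℝ² → ℝ, each CPL with at most 3 pieces, such that f = f₁ + f₂. -/

import Mathlib

open Set

noncomputable section

/-- The plane `ℝ²`, modeled as functions `Fin 2 → ℝ`. -/
abbrev E2 := Fin 2 → ℝ

/-- `f : ℝ² → ℝ` is affine: `f x = ⟨a, x⟩ + b`. -/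
def IsAffineFn (f : E2 → ℝ) : Prop :=
  ∃ (a : E2) (b : ℝ), ∀ x, f x = dotProduct a x + b

/-- `f : ℝ² → ℝ` is linear: `f x = ⟨a, x⟩`. -/
def IsLinearFn (f : E2 → ℝ) : Prop :=
  ∃ a : E2, ∀ x, f x = dotProduct a x

/-- An affine line in the plane. -/
def IsLine (l : Set E2) : Prop :=
  ∃ v u : E2, u ≠ 0 ∧ l = {x | ∃ t : ℝ, x = v + t • u}

/-- A polygonal piece: a regular closed set with nonempty connected interior whose
frontier is contained in a finite union of affine lines. -/
def IsPolygonalPiece (P : Set E2) : Prop :=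
  IsClosed P ∧ (interior P).Nonempty ∧ IsConnected (interior P) ∧
    P = closure (interior P) ∧
    ∃ (m : ℕ) (L : Fin m → Set E2), (∀ i, IsLine (L i)) ∧ frontier P ⊆ ⋃ i, L i

/-- `Ps` is an admissible family of pieces for `f`. -/
def IsAdmissible (f : E2 → ℝ) (Ps : Finset (Set E2)) : Prop :=
  (∀ P ∈ Ps, IsPolygonalPiece P) ∧
  (⋃ P ∈ Ps, P) = univ ∧
  (∀ P ∈ Ps, ∀ Q ∈ Ps, P ≠ Q → P ∩ Q = frontier P ∩ frontier Q) ∧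
  (∀ P ∈ Ps, ∃ g : E2 → ℝ, IsAffineFn g ∧ EqOn f g P)

/-- `f` is continuous piecewise affine with (at most) `p` pieces. -/
def IsCPA (p : ℕ) (f : E2 → ℝ) : Prop :=
  Continuous f ∧ ∃ Ps : Finset (Set E2), Ps.card ≤ p ∧ IsAdmissible f Ps

/-- `P` is a cone with apex `v`. -/
def IsConeWithApex (v : E2) (P : Set E2) : Prop :=
  ∀ x ∈ P, ∀ t : ℝ, 0 ≤ t → v + t • (x - v) ∈ P

/-- A `v`-function with (at most) `p` pieces: a CPA function admitting an admissible
family of pieces all of which are cones with apex `v`. -/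
def IsVFunction (v : E2) (p : ℕ) (f : E2 → ℝ) : Prop :=
  Continuous f ∧ ∃ Ps : Finset (Set E2), Ps.card ≤ p ∧ IsAdmissible f Ps ∧
    ∀ P ∈ Ps, IsConeWithApex v P

/-- A CPL function with (at most) `p` pieces: a `0`-function whose affine components
are linear. -/
def IsCPL (p : ℕ) (f : E2 → ℝ) : Prop :=
  Continuous f ∧ ∃ Ps : Finset (Set E2), Ps.card ≤ p ∧ IsAdmissible f Ps ∧
    (∀ P ∈ Ps, IsConeWithApex 0 P) ∧
    ∀ P ∈ Ps, ∃ g : E2 → ℝ, IsLinearFn g ∧ EqOn f g P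

/-- Componentwise ReLU. -/
def relu {n : ℕ} (x : Fin n → ℝ) : Fin n → ℝ := fun i => max 0 (x i)

/-! On each open quadrant cut out by the two lines `f` is linear, hence, by continuity, on each
closed quadrant. In coordinates `x = s₁ • u₁ + s₂ • u₂` the points `x`, `s₁ • u₁` and `s₂ • u₂`
lie in a common closed quadrant, so `f x = f (s₁ • u₁) + f (s₂ • u₂)`; and `f` is positively
homogeneous, so `x ↦ f (sᵢ • uᵢ)` is linear on each of the half-planes `sᵢ ≥ 0` and `sᵢ ≤ 0`, i.e.
CPL with two pieces. -/

open Filter Topology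

lemma isLinearFn_iff {g : E2 → ℝ} : IsLinearFn g ↔ ∃ φ : Module.Dual ℝ E2, ⇑φ = g := by
  constructor
  · rintro ⟨a, ha⟩
    exact ⟨dotProductEquiv ℝ (Fin 2) a, funext fun x => (ha x).symm⟩
  · rintro ⟨φ, rfl⟩
    obtain ⟨a, rfl⟩ := (dotProductEquiv ℝ (Fin 2)).surjective φ
    exact ⟨a, fun x => rfl⟩

lemma IsLinearFn.isAffineFn {g : E2 → ℝ} (h : IsLinearFn g) : IsAffineFn g := by
  obtain ⟨a, ha⟩ := h
  exact ⟨a, 0, fun x => by rw [ha x, add_zero]⟩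

lemma IsCPL.mono {p q : ℕ} {f : E2 → ℝ} (hpq : p ≤ q) (hf : IsCPL p f) : IsCPL q f := by
  obtain ⟨hc, Ps, hcard, hPs⟩ := hf
  exact ⟨hc, Ps, hcard.trans hpq, hPs⟩

lemma isLine_ker {φ : Module.Dual ℝ E2} (hφ : φ ≠ 0) : IsLine (LinearMap.ker φ : Set E2) := by
  have hrange : Module.finrank ℝ (LinearMap.range φ) = 1 := by
    rw [LinearMap.range_eq_top.2 (LinearMap.surjective_of_ne_zero hφ), finrank_top,
      Module.finrank_self]
  have hker : Module.finrank ℝ (LinearMap.ker φ) = 1 := by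
    have := φ.finrank_range_add_finrank_ker
    rw [hrange, Module.finrank_fin_fun] at this
    omega
  obtain ⟨v, hv, hspan⟩ := finrank_eq_one_iff'.1 hker
  refine ⟨0, v, fun h => hv (Subtype.ext h), Set.ext fun x => ⟨fun hx => ?_, ?_⟩⟩
  · obtain ⟨t, ht⟩ := hspan ⟨x, hx⟩
    exact ⟨t, by simpa using (congrArg Subtype.val ht).symm⟩
  · rintro ⟨t, rfl⟩
    simp

section HalfPlane

variable {φ : Module.Dual ℝ E2}

lemma isOpenMap_of_ne_zero (hφ : φ ≠ 0) : IsOpenMap φ :=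
  φ.isOpenMap_of_finiteDimensional (LinearMap.surjective_of_ne_zero hφ)

lemma interior_setOf_nonneg (hφ : φ ≠ 0) : interior {x | 0 ≤ φ x} = {x | 0 < φ x} := by
  simpa only [interior_Ici] using! ((isOpenMap_of_ne_zero hφ).preimage_interior_eq_interior_preimage
    φ.continuous_of_finiteDimensional (Ici 0)).symm

lemma frontier_setOf_nonneg (hφ : φ ≠ 0) : frontier {x | 0 ≤ φ x} = LinearMap.ker φ := by
  simpa only [frontier_Ici] using! ((isOpenMap_of_ne_zero hφ).preimage_frontier_eq_frontier_preimage
    φ.continuous_of_finiteDimensional (Ici 0)).symm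

lemma isPolygonalPiece_setOf_nonneg (hφ : φ ≠ 0) : IsPolygonalPiece {x | 0 ≤ φ x} := by
  obtain ⟨p, hp⟩ := LinearMap.surjective_of_ne_zero hφ 1
  have hint := interior_setOf_nonneg hφ
  refine ⟨isClosed_le continuous_const φ.continuous_of_finiteDimensional,
    ⟨p, by simp [hint, hp]⟩, ⟨⟨p, by simp [hint, hp]⟩, ?_⟩, ?_,
    1, fun _ => LinearMap.ker φ, fun _ => isLine_ker hφ, ?_⟩
  · rw [hint]
    exact (convex_halfSpace_gt φ.isLinear 0).isPreconnected
  · rw [hint]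
    simpa only [closure_Ioi] using! ((isOpenMap_of_ne_zero hφ).preimage_closure_eq_closure_preimage
      φ.continuous_of_finiteDimensional (Ioi 0))
  · rw [frontier_setOf_nonneg hφ]
    exact subset_iUnion_of_subset 0 le_rfl

lemma isConeWithApex_zero_setOf_nonneg (φ : Module.Dual ℝ E2) :
    IsConeWithApex 0 {x | 0 ≤ φ x} := fun x hx t ht => by
  simpa using mul_nonneg ht hx

end HalfPlane

lemma isCPL_max_min {φ : Module.Dual ℝ E2} (hφ : φ ≠ 0) (a b : ℝ) :
    IsCPL 2 fun x => a * max (φ x) 0 + b * min (φ x) 0 := by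
  classical
  set P := {x | 0 ≤ φ x}
  set Q := {x | 0 ≤ (-φ) x}
  have hφ' : -φ ≠ 0 := neg_ne_zero.2 hφ
  have hPQ : P ∩ Q = frontier P ∩ frontier Q := by
    rw [frontier_setOf_nonneg hφ, frontier_setOf_nonneg hφ', LinearMap.ker_neg, inter_self]
    ext x
    simp [P, Q, le_antisymm_iff, and_comm]
  have hfP : EqOn (fun x => a * max (φ x) 0 + b * min (φ x) 0) ⇑(a • φ) P :=
    fun x (hx : 0 ≤ φ x) => by simp [hx]
  have hfQ : EqOn (fun x => a * max (φ x) 0 + b * min (φ x) 0) ⇑(b • φ) Q := fun x hx => by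
    have hx : φ x ≤ 0 := by simpa [Q] using hx
    simp [hx]
  refine ⟨by fun_prop, {P, Q}, Finset.card_le_two, ⟨?_, ?_, ?_, ?_⟩, ?_, ?_⟩ <;>
    simp only [Finset.mem_insert, Finset.mem_singleton, forall_eq_or_imp, forall_eq,
      iUnion_iUnion_eq_or_left, iUnion_iUnion_eq_left]
  · exact ⟨isPolygonalPiece_setOf_nonneg hφ, isPolygonalPiece_setOf_nonneg hφ'⟩
  · refine eq_univ_of_forall fun x => ?_
    simpa [P, Q] using le_total 0 (φ x)
  · exact ⟨⟨fun h => absurd rfl h, fun _ => hPQ⟩,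
      fun _ => by rw [inter_comm, hPQ, inter_comm], fun h => absurd rfl h⟩
  · exact ⟨⟨_, (isLinearFn_iff.2 ⟨_, rfl⟩).isAffineFn, hfP⟩,
      ⟨_, (isLinearFn_iff.2 ⟨_, rfl⟩).isAffineFn, hfQ⟩⟩
  · exact ⟨isConeWithApex_zero_setOf_nonneg φ, isConeWithApex_zero_setOf_nonneg (-φ)⟩
  · exact ⟨⟨_, isLinearFn_iff.2 ⟨_, rfl⟩, hfP⟩, ⟨_, isLinearFn_iff.2 ⟨_, rfl⟩, hfQ⟩⟩

lemma mem_closure_of_forall_add_smul_mem {E : Type*} [AddCommGroup E] [Module ℝ E]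
    [TopologicalSpace E] [ContinuousAdd E] [ContinuousSMul ℝ E] {s : Set E} {x p : E}
    (h : ∀ ε : ℝ, 0 < ε → x + ε • p ∈ s) : x ∈ closure s := by
  have hlim : Tendsto (fun ε : ℝ => x + ε • p) (𝓝[>] 0) (𝓝 x) :=
    ((continuous_const.add (continuous_id.smul continuous_const)).tendsto' 0 x
      (by simp)).mono_left nhdsWithin_le_nhds
  exact mem_closure_of_tendsto hlim (eventually_nhdsWithin_of_forall h)

lemma Module.Basis.coord_ne_zero {ι R M : Type*} [Semiring R] [Nontrivial R] [AddCommMonoid M]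
    [Module R M] (B : Module.Basis ι R M) (i : ι) : B.coord i ≠ 0 := fun h => by
  simpa using LinearMap.congr_fun h (B i)

section Orthant

variable {ι E : Type*} [AddCommGroup E] [Module ℝ E]

def orthant (B : Module.Basis ι ℝ E) (σ : ι → ℝ) : Set E := {x | ∀ i, 0 ≤ σ i * B.coord i x}

variable (B : Module.Basis ι ℝ E) {σ : ι → ℝ}

lemma exists_mem_orthant (x : E) : ∃ σ : ι → ℝ, (∀ i, σ i ≠ 0) ∧ x ∈ orthant B σ := by
  classical
  refine ⟨fun i => if 0 ≤ B.coord i x then 1 else -1,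
    fun i => by dsimp only; split_ifs <;> norm_num, fun i => ?_⟩
  dsimp only
  split_ifs with h
  · simpa using h
  · linarith [not_le.1 h]

lemma smul_mem_orthant {x : E} (hx : x ∈ orthant B σ) {t : ℝ} (ht : 0 ≤ t) :
    t • x ∈ orthant B σ := fun i => by
  simpa [mul_left_comm] using mul_nonneg ht (hx i)

lemma coord_smul_mem_orthant {x : E} (hx : x ∈ orthant B σ) (j : ι) :
    B.coord j x • B j ∈ orthant B σ := fun i => by
  classical
  rcases eq_or_ne i j with rfl | hij
  · simpa using hx i
  · simp [Module.Basis.repr_self, hij.symm]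

lemma coord_sum_smul [Fintype ι] (i : ι) : B.coord i (∑ j, σ j • B j) = σ i := by
  rw [← B.equivFun_symm_apply, B.coord_equivFun_symm]

lemma convex_setOf_coord_pos : Convex ℝ {x | ∀ i, 0 < σ i * B.coord i x} := by
  simp only [ofPred_forall]
  exact convex_iInter fun i => convex_halfSpace_gt ((σ i • B.coord i).isLinear) 0

end Orthant

section LinearOnOrthants

variable {ι E : Type*} [AddCommGroup E] [Module ℝ E] (B : Module.Basis ι ℝ E)
  {f : E → ℝ} (hf : ∀ σ : ι → ℝ, (∀ i, σ i ≠ 0) → ∃ g : Module.Dual ℝ E, EqOn f g (orthant B σ))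
include hf

lemma map_smul_of_nonneg (x : E) {t : ℝ} (ht : 0 ≤ t) : f (t • x) = t * f x := by
  obtain ⟨σ, hσ, hx⟩ := exists_mem_orthant B x
  obtain ⟨g, hg⟩ := hf σ hσ
  rw [hg hx, hg (smul_mem_orthant B hx ht), map_smul, smul_eq_mul]

lemma map_eq_sum_coord_smul [Fintype ι] (x : E) : f x = ∑ i, f (B.coord i x • B i) := by
  obtain ⟨σ, hσ, hx⟩ := exists_mem_orthant B x
  obtain ⟨g, hg⟩ := hf σ hσ
  rw [hg hx, Finset.sum_congr rfl fun i _ => hg (coord_smul_mem_orthant B hx i), ← map_sum]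
  simp [B.sum_repr]

end LinearOnOrthants

lemma apply_smul_eq_max_min {E : Type*} [AddCommGroup E] [Module ℝ E] {f : E → ℝ}
    (hf : ∀ x : E, ∀ t : ℝ, 0 ≤ t → f (t • x) = t * f x) (v : E) (t : ℝ) :
    f (t • v) = f v * max t 0 + -f (-v) * min t 0 := by
  rcases le_total 0 t with ht | ht
  · simp [hf v t ht, ht, mul_comm]
  · have : t • v = (-t) • -v := by rw [neg_smul_neg]
    rw [this, hf (-v) (-t) (neg_nonneg.2 ht)]
    simp [ht, mul_comm]

lemma exists_linear_eqOn_orthant {B : Module.Basis (Fin 2) ℝ E2} {L : Set E2}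
    (hL : L ⊆ {x | ∃ i, B.coord i x = 0}) {f : E2 → ℝ} (hf : Continuous f)
    (hpieces : ∀ x ∉ L, ∃ g : E2 → ℝ, IsLinearFn g ∧ EqOn f g (connectedComponentIn Lᶜ x))
    {σ : Fin 2 → ℝ} (hσ : ∀ i, σ i ≠ 0) : ∃ g : Module.Dual ℝ E2, EqOn f g (orthant B σ) := by
  set S := {x | ∀ i, 0 < σ i * B.coord i x}
  set p := ∑ j, σ j • B j
  have hσp : ∀ i, 0 < σ i * B.coord i p := fun i => by
    rw [coord_sum_smul]; exact mul_self_pos.2 (hσ i)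
  have hSL : S ⊆ Lᶜ := fun x hx hxL => by
    obtain ⟨i, hi⟩ := hL hxL
    simpa [hi] using hx i
  obtain ⟨g, hg, hfg⟩ := hpieces p (hSL hσp)
  obtain ⟨φ, rfl⟩ := isLinearFn_iff.1 hg
  have hS : EqOn f φ S := hfg.mono
    ((convex_setOf_coord_pos B).isPreconnected.subset_connectedComponentIn hσp hSL)
  refine ⟨φ, (hS.closure hf φ.continuous_of_finiteDimensional).mono fun x hx =>
    mem_closure_of_forall_add_smul_mem (s := S) (p := p) fun ε hε i => ?_⟩
  have hxi : 0 ≤ σ i * B.coord i x := hx i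
  have hpi := hσp i
  simp only [map_add, map_smul, smul_eq_mul, mul_add, mul_left_comm (σ i) ε]
  positivity

/-- A continuous function that is piecewise linear on the four sectors
determined by two intersecting lines through the origin is the sum of two CPL functions
with at most three pieces each. -/
theorem cpl_two_lines_decomposition (u₁ u₂ : E2)
    (hind : LinearIndependent ℝ ![u₁, u₂])
    (L : Set E2)
    (hL : L = {y | ∃ t : ℝ, y = t • u₁} ∪ {y | ∃ t : ℝ, y = t • u₂})
    (f : E2 → ℝ) (hcont : Continuous f)
    (hpieces : ∀ x ∉ L, ∃ g : E2 → ℝ, IsLinearFn g ∧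
      EqOn f g (connectedComponentIn Lᶜ x)) :
    ∃ f₁ f₂ : E2 → ℝ, IsCPL 3 f₁ ∧ IsCPL 3 f₂ ∧ ∀ x, f x = f₁ x + f₂ x := by
  classical
  set B := basisOfPiSpaceOfLinearIndependent hind
  have hB : ⇑B = ![u₁, u₂] := coe_basisOfPiSpaceOfLinearIndependent hind
  have hB₀ : B 0 = u₁ := by simp [hB]
  have hB₁ : B 1 = u₂ := by simp [hB]
  have hLB : L ⊆ {x | ∃ i, B.coord i x = 0} := by
    rw [hL, ← hB₀, ← hB₁]
    rintro x (⟨t, rfl⟩ | ⟨t, rfl⟩)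
    · exact ⟨1, by simp [Module.Basis.repr_self]⟩
    · exact ⟨0, by simp [Module.Basis.repr_self]⟩
  have hlin := fun (σ : Fin 2 → ℝ) (hσ : ∀ i, σ i ≠ 0) =>
    exists_linear_eqOn_orthant hLB hcont hpieces hσ
  have hhom := map_smul_of_nonneg B hlin
  refine ⟨fun x => f u₁ * max (B.coord 0 x) 0 + -f (-u₁) * min (B.coord 0 x) 0,
    fun x => f u₂ * max (B.coord 1 x) 0 + -f (-u₂) * min (B.coord 1 x) 0,
    (isCPL_max_min (B.coord_ne_zero 0) _ _).mono (by norm_num),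
    (isCPL_max_min (B.coord_ne_zero 1) _ _).mono (by norm_num), fun x => ?_⟩
  rw [map_eq_sum_coord_smul B hlin x, Fin.sum_univ_two, apply_smul_eq_max_min hhom,
    apply_smul_eq_max_min hhom, hB₀, hB₁]
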